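/- A nonempty open set O ⊆ 𝕆 is connected if and only if any two points of O can be joined by a circular lifting contained in O, i.e., for all x₀, x₁ ∈ O there exist continuous paths γ : [0,1] → ℂ and Θ : [0,1] → 𝕊 such that the path γ_Θ(t) := τ_{Θ(t)}(γ(t)) satisfies γ_Θ(0) = x₀, γ_Θ(1) = x₁, and γ_Θ([0,1]) ⊆ O. -/

import Mathlib

noncomputable section

/-- The octonions, realized as the Cayley–Dickson double of the quaternions. -/
@[ext] structure Octonion : Type where
  a : Quaternion ℝ
  b : Quaternion ℝ

notation "𝕆" => Octonion

namespace Octonion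

instance : Zero 𝕆 := ⟨⟨0, 0⟩⟩
instance : One 𝕆 := ⟨⟨1, 0⟩⟩
instance : Add 𝕆 := ⟨fun x y => ⟨x.a + y.a, x.b + y.b⟩⟩
instance : Neg 𝕆 := ⟨fun x => ⟨-x.a, -x.b⟩⟩
instance : Sub 𝕆 := ⟨fun x y => ⟨x.a - y.a, x.b - y.b⟩⟩
/-- Cayley–Dickson multiplication. -/
instance : Mul 𝕆 := ⟨fun x y => ⟨x.a * y.a - star y.b * x.b, y.b * x.a + x.b * star y.a⟩⟩
instance : SMul ℝ 𝕆 := ⟨fun r x => ⟨r • x.a, r • x.b⟩⟩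
instance : SMul ℕ 𝕆 := ⟨fun n x => ⟨n • x.a, n • x.b⟩⟩
instance : SMul ℤ 𝕆 := ⟨fun n x => ⟨n • x.a, n • x.b⟩⟩

def toProd (x : 𝕆) : Quaternion ℝ × Quaternion ℝ := (x.a, x.b)

lemma toProd_injective : Function.Injective toProd := by
  intro x y h
  cases x; cases y
  simpa [toProd, Prod.ext_iff, Octonion.mk.injEq] using h

instance : AddCommGroup 𝕆 :=
  Function.Injective.addCommGroup toProd toProd_injective rfl (fun _ _ => rfl) (fun _ => rfl)
    (fun _ _ => rfl) (fun _ _ => rfl) (fun _ _ => rfl)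

def toProdHom : 𝕆 →+ Quaternion ℝ × Quaternion ℝ :=
  { toFun := toProd, map_zero' := rfl, map_add' := fun _ _ => rfl }

instance : Module ℝ 𝕆 :=
  Function.Injective.module ℝ toProdHom toProd_injective (fun _ _ => rfl)

def toProdLin : 𝕆 →ₗ[ℝ] Quaternion ℝ × Quaternion ℝ :=
  { toFun := toProd, map_add' := fun _ _ => rfl, map_smul' := fun _ _ => rfl }

instance : NormedAddCommGroup 𝕆 := NormedAddCommGroup.induced 𝕆 _ toProdHom toProd_injective
instance : NormedSpace ℝ 𝕆 := NormedSpace.induced ℝ 𝕆 _ toProdLin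

/-- Octonionic conjugation. -/
def conj (x : 𝕆) : 𝕆 := ⟨star x.a, -x.b⟩

/-- The real part of an octonion. -/
def re (x : 𝕆) : ℝ := x.a.re

/-- The imaginary part of an octonion. -/
def im (x : 𝕆) : 𝕆 := ⟨x.a.im, x.b⟩

/-- The squared (Euclidean) norm of an octonion. -/
def normSq (x : 𝕆) : ℝ := Quaternion.normSq x.a + Quaternion.normSq x.b

/-- The (Euclidean) norm of an octonion. -/
def onorm (x : 𝕆) : ℝ := Real.sqrt (normSq x)

instance : Inv 𝕆 := ⟨fun x => (normSq x)⁻¹ • conj x⟩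

/-- The sphere of imaginary units of `𝕆`. -/
def sph : Set 𝕆 := {I | onorm I = 1 ∧ re I = 0}

/-- `tau I (α + β i) = α + β I`. -/
def tau (I : 𝕆) (z : ℂ) : 𝕆 := z.re • (1 : 𝕆) + z.im • I

end Octonion

/-!
Every octonion is `τ_I(z)` for some `(z, I) ∈ ℂ × 𝕊`, and a circular lifting in `O` is a path in
the space of pairs `(z, I)` with `τ_I(z) ∈ O`. Call `x, y ∈ O` circularly joined when such a path
runs from a preimage of `x` to a preimage of `y`. Every segment is a circular lifting (take the
polar decomposition of its imaginary part), so in an open `O` each point is circularly joined to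
all points of a small ball. The relation is transitive: two preimages of the same point are either
joined inside its fibre (for a real point, because `𝕊` is path connected), or equal, or exchanged
by `(z, I) ↦ (z̄, -I)`, which preserves `τ`. Hence in a connected open `O` any two points are
circularly joined; conversely, circular liftings are paths in `O`, so `O` is path connected.
-/

namespace Octonion

open Topology

@[simp] lemma re_add (x y : 𝕆) : re (x + y) = re x + re y := rfl
@[simp] lemma re_smul (r : ℝ) (x : 𝕆) : re (r • x) = r * re x := rfl
@[simp] lemma re_neg (x : 𝕆) : re (-x) = -re x := rfl
@[simp] lemma re_sub (x y : 𝕆) : re (x - y) = re x - re y := rfl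
@[simp] lemma re_one : re 1 = 1 := rfl
@[simp] lemma re_im (x : 𝕆) : re (im x) = 0 := rfl

@[simp] lemma im_add (x y : 𝕆) : im (x + y) = im x + im y :=
  Octonion.ext (Quaternion.im_add _ _) rfl

@[simp] lemma im_smul (r : ℝ) (x : 𝕆) : im (r • x) = r • im x :=
  Octonion.ext (Quaternion.im_smul _ _) rfl

@[simp] lemma im_sub (x y : 𝕆) : im (x - y) = im x - im y :=
  Octonion.ext (Quaternion.im_sub _ _) rfl

@[simp] lemma im_one : im 1 = 0 :=
  Octonion.ext Quaternion.im_one rfl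

lemma re_smul_one_add_im (x : 𝕆) : re x • (1 : 𝕆) + im x = x := by
  refine Octonion.ext ?_ ?_
  · show x.a.re • (1 : Quaternion ℝ) + x.a.im = x.a
    rw [← Algebra.algebraMap_eq_smul_one, Quaternion.algebraMap_def, Quaternion.re_add_im]
  · show x.a.re • (0 : Quaternion ℝ) + x.b = x.b
    rw [smul_zero, zero_add]

lemma im_eq_self {x : 𝕆} (hx : re x = 0) : im x = x := by
  simpa [hx] using re_smul_one_add_im x

lemma continuous_toProd : Continuous toProd :=
  (AddMonoidHomClass.isometry_of_norm toProdHom fun _ => rfl).continuous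

lemma continuous_re : Continuous re :=
  Quaternion.continuous_re.comp (continuous_fst.comp continuous_toProd)

lemma normSq_smul (r : ℝ) (x : 𝕆) : normSq (r • x) = r ^ 2 * normSq x := by
  simp only [normSq]
  rw [show (r • x).a = r • x.a from rfl, show (r • x).b = r • x.b from rfl,
    Quaternion.normSq_smul, Quaternion.normSq_smul, mul_add]

lemma onorm_smul (r : ℝ) (x : 𝕆) : onorm (r • x) = |r| * onorm x := by
  rw [onorm, onorm, normSq_smul, Real.sqrt_mul (sq_nonneg r), Real.sqrt_sq_eq_abs]

lemma onorm_nonneg (x : 𝕆) : 0 ≤ onorm x := Real.sqrt_nonneg _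

lemma onorm_eq_zero {x : 𝕆} : onorm x = 0 ↔ x = 0 := by
  have ha := Quaternion.normSq_nonneg (a := x.a)
  have hb := Quaternion.normSq_nonneg (a := x.b)
  rw [onorm, normSq, Real.sqrt_eq_zero (add_nonneg ha hb), add_eq_zero_iff_of_nonneg ha hb,
    Quaternion.normSq_eq_zero, Quaternion.normSq_eq_zero, Octonion.ext_iff]
  rfl

lemma continuous_onorm : Continuous onorm := by
  have hq : Continuous fun q : Quaternion ℝ => Quaternion.normSq q := by
    simp only [Quaternion.normSq_eq_norm_mul_self]
    fun_prop
  exact Real.continuous_sqrt.comp ((hq.comp (continuous_fst.comp continuous_toProd)).add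
    (hq.comp (continuous_snd.comp continuous_toProd)))

lemma neg_mem_sph {I : 𝕆} (hI : I ∈ sph) : -I ∈ sph := by
  refine ⟨?_, by rw [re_neg, hI.2, neg_zero]⟩
  rw [← neg_one_smul ℝ I, onorm_smul, abs_neg, abs_one, one_mul, hI.1]

lemma inv_onorm_smul_mem_sph {x : 𝕆} (hx : x ≠ 0) (hre : re x = 0) : (onorm x)⁻¹ • x ∈ sph := by
  refine ⟨?_, by rw [re_smul, hre, mul_zero]⟩
  rw [onorm_smul, abs_inv, abs_of_nonneg (onorm_nonneg x),
    inv_mul_cancel₀ (mt onorm_eq_zero.mp hx)]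

lemma ne_zero_of_mem_sph {I : 𝕆} (hI : I ∈ sph) : I ≠ 0 := by
  rintro rfl
  exact one_ne_zero (hI.1.symm.trans (onorm_eq_zero.mpr rfl))

def e₁ : 𝕆 := ⟨⟨0, 1, 0, 0⟩, 0⟩

def e₂ : 𝕆 := ⟨⟨0, 0, 1, 0⟩, 0⟩

lemma e₁_mem_sph : e₁ ∈ sph := by
  refine ⟨?_, rfl⟩
  show Real.sqrt (Quaternion.normSq ⟨0, 1, 0, 0⟩ + Quaternion.normSq 0) = 1
  rw [Quaternion.normSq_def' (⟨0, 1, 0, 0⟩ : Quaternion ℝ), map_zero]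
  norm_num

lemma exists_smul_mem_sph {x : 𝕆} (hx : re x = 0) : ∃ I ∈ sph, ∃ r : ℝ, r • I = x := by
  by_cases h0 : x = 0
  · exact ⟨e₁, e₁_mem_sph, 0, by rw [h0, zero_smul]⟩
  · exact ⟨_, inv_onorm_smul_mem_sph h0 hx, onorm x, smul_inv_smul₀ (mt onorm_eq_zero.mp h0) x⟩

def reₗ : 𝕆 →ₗ[ℝ] ℝ where
  toFun := re
  map_add' := re_add
  map_smul' := re_smul

lemma one_lt_rank_ker_reₗ : 1 < Module.rank ℝ (LinearMap.ker reₗ) := by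
  let v : Fin 2 → LinearMap.ker reₗ := ![⟨e₁, rfl⟩, ⟨e₂, rfl⟩]
  have hv : LinearIndependent ℝ v := by
    refine LinearIndependent.of_comp (LinearMap.ker reₗ).subtype ?_
    rw [show (LinearMap.ker reₗ).subtype ∘ v = ![e₁, e₂] by funext i; fin_cases i <;> rfl,
      LinearIndependent.pair_iff]
    intro s t hst
    have hI : s * 1 + t * 0 = 0 := congrArg (fun x : 𝕆 => x.a.imI) hst
    have hJ : s * 0 + t * 1 = 0 := congrArg (fun x : 𝕆 => x.a.imJ) hst
    constructor <;> linarith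
  have := hv.cardinal_le_rank
  rw [Cardinal.mk_fin] at this
  exact lt_of_lt_of_le (by norm_num) this

lemma isPathConnected_sph : IsPathConnected sph := by
  have hsph : sph = (fun x : LinearMap.ker reₗ => (onorm x)⁻¹ • (x : 𝕆)) '' {0}ᶜ := by
    ext I
    refine ⟨fun hI => ⟨⟨I, hI.2⟩, ?_, ?_⟩, ?_⟩
    · exact fun h => ne_zero_of_mem_sph hI (congrArg Subtype.val h)
    · simp only [hI.1, inv_one, one_smul]
    · rintro ⟨x, hx, rfl⟩
      exact inv_onorm_smul_mem_sph (by simpa using hx) x.2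
  rw [hsph]
  refine (isPathConnected_compl_singleton_of_one_lt_rank one_lt_rank_ker_reₗ 0).image' ?_
  have hcont : Continuous fun x : LinearMap.ker reₗ => onorm x :=
    continuous_onorm.comp continuous_subtype_val
  exact (hcont.continuousOn.inv₀ fun x hx => mt onorm_eq_zero.mp (by simpa using hx)).smul
    continuous_subtype_val.continuousOn

lemma continuous_tau : Continuous fun p : ℂ × 𝕆 => tau p.2 p.1 := by
  unfold tau
  fun_prop

lemma tau_neg_conj (I : 𝕆) (z : ℂ) : tau (-I) (starRingEnd ℂ z) = tau I z := by
  rw [tau, tau, Complex.conj_re, Complex.conj_im, neg_smul, smul_neg, neg_neg]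

lemma re_tau {I : 𝕆} (hI : re I = 0) (z : ℂ) : re (tau I z) = z.re := by
  simp [tau, hI]

lemma im_tau {I : 𝕆} (hI : re I = 0) (z : ℂ) : im (tau I z) = z.im • I := by
  simp [tau, im_eq_self hI]

lemma tau_of_im_eq_zero {z : ℂ} (hz : z.im = 0) (I J : 𝕆) : tau I z = tau J z := by
  rw [tau, tau, hz, zero_smul, zero_smul]

lemma tau_re_of_im_eq_smul {x I : 𝕆} {c : ℝ} (h : im x = c • I) : tau I ⟨re x, c⟩ = x := by
  rw [tau, ← h, re_smul_one_add_im]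

lemma exists_lift_of_im_eq_smul {X : Type*} [TopologicalSpace X] {f : X → 𝕆} {c : X → ℝ}
    {Θ : X → 𝕆} (hf : Continuous f) (hc : Continuous c) (hΘ : Continuous Θ)
    (hsph : ∀ t, Θ t ∈ sph) (him : ∀ t, im (f t) = c t • Θ t) :
    ∃ g : X → ℂ × 𝕆, Continuous g ∧ ∀ t, (g t).2 ∈ sph ∧ tau (g t).2 (g t).1 = f t :=
  ⟨fun t => (Complex.equivRealProdCLM.symm (re (f t), c t), Θ t),
    (Complex.equivRealProdCLM.symm.continuous.comp ((continuous_re.comp hf).prodMk hc)).prodMk hΘ,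
    fun t => ⟨hsph t, tau_re_of_im_eq_smul (him t)⟩⟩

lemma exists_lift_segment (u v : 𝕆) :
    ∃ g : unitInterval → ℂ × 𝕆, Continuous g ∧
      ∀ t, (g t).2 ∈ sph ∧ tau (g t).2 (g t).1 = u + (t : ℝ) • (v - u) := by
  set m : ℝ → 𝕆 := fun t => im u + t • (im v - im u)
  have hf : Continuous fun t : unitInterval => u + (t : ℝ) • (v - u) := by fun_prop
  have him : ∀ t : ℝ, im (u + t • (v - u)) = m t := by simp [m]
  by_cases hvanish : ∃ t₀, m t₀ = 0
  · -- `m` is affine, so then `m t = (t - t₀) • (im v - im u)` keeps one direction throughout.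
    obtain ⟨t₀, ht₀⟩ := hvanish
    obtain ⟨W, hW, r, hr⟩ := exists_smul_mem_sph (x := im v - im u) (by simp)
    refine exists_lift_of_im_eq_smul hf (c := fun t => ((t : ℝ) - t₀) * r) (by fun_prop)
      continuous_const (fun _ => hW) fun t => ?_
    rw [him, ← sub_zero (m t), ← ht₀, mul_smul, hr]
    simp only [m]
    module
  · push Not at hvanish
    have hne : ∀ t, onorm (m t) ≠ 0 := fun t => mt onorm_eq_zero.mp (hvanish t)
    have hcm : Continuous fun t : unitInterval => m t := by fun_prop
    refine exists_lift_of_im_eq_smul hf (c := fun t => onorm (m t))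
      (Θ := fun t => (onorm (m t))⁻¹ • m t) (continuous_onorm.comp hcm)
      ((continuous_onorm.comp hcm).inv₀ (fun t => hne t) |>.smul hcm)
      (fun t => inv_onorm_smul_mem_sph (hvanish t) (by simp [m])) fun t => ?_
    rw [him, smul_inv_smul₀ (hne t)]

def liftSpace (O : Set 𝕆) : Set (ℂ × 𝕆) := {p | p.2 ∈ sph ∧ tau p.2 p.1 ∈ O}

def conjPair (p : ℂ × 𝕆) : ℂ × 𝕆 := (starRingEnd ℂ p.1, -p.2)

def CircularlyJoined (O : Set 𝕆) (x y : 𝕆) : Prop :=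
  ∃ p q : ℂ × 𝕆, tau p.2 p.1 = x ∧ tau q.2 q.1 = y ∧ JoinedIn (liftSpace O) p q

lemma tau_conjPair (p : ℂ × 𝕆) : tau (conjPair p).2 (conjPair p).1 = tau p.2 p.1 :=
  tau_neg_conj p.2 p.1

lemma joinedIn_liftSpace_conjPair {O : Set 𝕆} {p q : ℂ × 𝕆} (h : JoinedIn (liftSpace O) p q) :
    JoinedIn (liftSpace O) (conjPair p) (conjPair q) := by
  refine (h.map (f := conjPair) (by unfold conjPair; fun_prop)).mono ?_
  rintro _ ⟨r, hr, rfl⟩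
  exact ⟨neg_mem_sph hr.1, (tau_conjPair r).symm ▸ hr.2⟩

lemma joinedIn_liftSpace_of_im_eq_zero {O : Set 𝕆} {z : ℂ} (hz : z.im = 0) {I J : 𝕆}
    (hI : (z, I) ∈ liftSpace O) (hJ : J ∈ sph) : JoinedIn (liftSpace O) (z, I) (z, J) := by
  refine ((isPathConnected_sph.joinedIn I hI.1 J hJ).map (f := fun K => (z, K))
    (by fun_prop)).mono ?_
  rintro _ ⟨K, hK, rfl⟩
  exact ⟨hK, tau_of_im_eq_zero hz I K ▸ hI.2⟩

lemma joinedIn_liftSpace_or_eq_conjPair {O : Set 𝕆} {p q : ℂ × 𝕆} (hp : p ∈ liftSpace O)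
    (hq : q.2 ∈ sph) (h : tau p.2 p.1 = tau q.2 q.1) :
    JoinedIn (liftSpace O) p q ∨ p = conjPair q := by
  have hre : p.1.re = q.1.re := by rw [← re_tau hp.1.2, h, re_tau hq.2]
  have him : p.1.im • p.2 = q.1.im • q.2 := by rw [← im_tau hp.1.2, h, im_tau hq.2]
  have habs : |p.1.im| = |q.1.im| := by
    simpa [onorm_smul, hp.1.1, hq.1] using congrArg onorm him
  by_cases h0 : p.1.im = 0
  · have hq0 : q.1.im = 0 := by simpa [h0] using habs.symm
    have hz : p.1 = q.1 := Complex.ext hre (h0.trans hq0.symm)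
    left
    convert joinedIn_liftSpace_of_im_eq_zero h0 hp hq using 1
    exact Prod.ext hz.symm rfl
  rcases abs_eq_abs.mp habs with heq | hneg
  · left
    have hI : p.2 = q.2 := smul_right_injective 𝕆 h0 (show p.1.im • p.2 = p.1.im • q.2 by
      rw [him, heq])
    obtain rfl : p = q := Prod.ext (Complex.ext hre heq) hI
    exact JoinedIn.refl hp
  · right
    refine Prod.ext (Complex.ext hre (by simp [conjPair, hneg])) (smul_right_injective 𝕆 h0 ?_)
    show p.1.im • p.2 = p.1.im • -q.2
    rw [him, hneg, neg_smul, smul_neg, neg_neg]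

lemma CircularlyJoined.symm {O : Set 𝕆} {x y : 𝕆} (h : CircularlyJoined O x y) :
    CircularlyJoined O y x :=
  let ⟨p, q, hp, hq, hpq⟩ := h
  ⟨q, p, hq, hp, hpq.symm⟩

lemma CircularlyJoined.trans {O : Set 𝕆} {x y w : 𝕆} (h₁ : CircularlyJoined O x y)
    (h₂ : CircularlyJoined O y w) : CircularlyJoined O x w := by
  obtain ⟨p, q, rfl, rfl, hpq⟩ := h₁
  obtain ⟨q', r, hq', rfl, hqr⟩ := h₂
  rcases joinedIn_liftSpace_or_eq_conjPair hpq.mem.2 hqr.mem.1.1 hq'.symm with hqq' | rfl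
  · exact ⟨p, r, rfl, rfl, hpq.trans (hqq'.trans hqr)⟩
  · exact ⟨p, conjPair r, rfl, tau_conjPair r, hpq.trans (joinedIn_liftSpace_conjPair hqr)⟩

lemma circularlyJoined_of_segment_subset {O : Set 𝕆} {u v : 𝕆} (h : segment ℝ u v ⊆ O) :
    CircularlyJoined O u v := by
  obtain ⟨g, hg, hgt⟩ := exists_lift_segment u v
  refine ⟨g 0, g 1, by simpa using (hgt 0).2, by simpa using (hgt 1).2,
    ⟨⟨g, hg⟩, rfl, rfl⟩, fun t => ⟨(hgt t).1, ?_⟩⟩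
  show tau (g t).2 (g t).1 ∈ O
  rw [(hgt t).2]
  exact h (segment_eq_image' ℝ u v ▸ ⟨t, t.2, rfl⟩)

lemma eventually_circularlyJoined {O : Set 𝕆} (hO : IsOpen O) {x : 𝕆} (hx : x ∈ O) :
    ∀ᶠ y in 𝓝 x, CircularlyJoined O x y := by
  obtain ⟨ε, hε, hball⟩ := Metric.isOpen_iff.mp hO x hx
  filter_upwards [Metric.ball_mem_nhds x hε] with y hy
  exact circularlyJoined_of_segment_subset
    (((convex_ball x ε).segment_subset (Metric.mem_ball_self hε) hy).trans hball)

lemma IsPreconnected.circularlyJoined {O : Set 𝕆} (hc : IsPreconnected O) (hO : IsOpen O)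
    {x y : 𝕆} (hx : x ∈ O) (hy : y ∈ O) : CircularlyJoined O x y :=
  hc.induction₂' _ (fun _ hz => nhdsWithin_le_nhds
      ((eventually_circularlyJoined hO hz).mono fun _ hw => ⟨hw, hw.symm⟩))
    (fun _ _ _ _ _ _ => CircularlyJoined.trans) hx hy

end Octonion

open Octonion in
/-- a nonempty open set `O ⊆ 𝕆` is connected iff any two of its points are joined
by a circular lifting contained in `O`. -/
theorem stmt7 (O : Set 𝕆) (hne : O.Nonempty) (hO : IsOpen O) :
    IsConnected O ↔
      ∀ x₀ ∈ O, ∀ x₁ ∈ O, ∃ γ : unitInterval → ℂ, ∃ Θ : unitInterval → 𝕆,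
        Continuous γ ∧ Continuous Θ ∧ (∀ t, Θ t ∈ sph) ∧
        tau (Θ 0) (γ 0) = x₀ ∧ tau (Θ 1) (γ 1) = x₁ ∧
        ∀ t, tau (Θ t) (γ t) ∈ O := by
  constructor
  · intro hconn x₀ h₀ x₁ h₁
    obtain ⟨p, q, rfl, rfl, γ, hγ⟩ := hconn.isPreconnected.circularlyJoined hO h₀ h₁
    exact ⟨fun t => (γ t).1, fun t => (γ t).2, γ.continuous.fst, γ.continuous.snd,
      fun t => (hγ t).1, by simp, by simp, fun t => (hγ t).2⟩
  · intro h
    refine (isPathConnected_iff.mpr ⟨hne, fun x hx y hy => ?_⟩).isConnected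
    obtain ⟨γ, Θ, hγ, hΘ, -, h₀, h₁, hγO⟩ := h x hx y hy
    exact ⟨⟨⟨fun t => tau (Θ t) (γ t), continuous_tau.comp (hγ.prodMk hΘ)⟩, h₀, h₁⟩, hγO⟩
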